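/- For every positive integer k, b_2(K_{2k+1}) = k + 1. -/

import Mathlib

open Finset

/-- The number of bicliques in the collection `f` that cover the pair `(u, v)`. -/
noncomputable def coversCount {V : Type*} {m : ℕ} (f : Fin m → Finset V × Finset V) (u v : V) : ℕ :=
  Nat.card {i : Fin m // (u ∈ (f i).1 ∧ v ∈ (f i).2) ∨ (u ∈ (f i).2 ∧ v ∈ (f i).1)}

/-- `f` is an odd cover of `G`: a collection of bicliques (pairs of disjoint finite sets of
vertices) covering each edge of `G` an odd number of times and each nonedge an even number
of times. -/
def IsOddCover {V : Type*} (G : SimpleGraph V) {m : ℕ}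
    (f : Fin m → Finset V × Finset V) : Prop :=
  (∀ i, Disjoint (f i).1 (f i).2) ∧
  ∀ u v : V, u ≠ v → (G.Adj u v ↔ Odd (coversCount f u v))

/-- `b2 G` is the minimum cardinality of an odd cover of `G`. -/
noncomputable def b2 {V : Type*} (G : SimpleGraph V) : ℕ :=
  sInf {m : ℕ | ∃ f : Fin m → Finset V × Finset V, IsOddCover G f}

/-- `r2 G` is the rank over `𝔽₂` of the adjacency matrix of `G`. -/
noncomputable def r2 {V : Type*} [Fintype V] (G : SimpleGraph V) : ℕ :=
  letI := Classical.decRel G.Adj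
  (SimpleGraph.adjMatrix (ZMod 2) G).rank

/-- Disjoint union of an indexed family of graphs, on the sigma type of the vertex types. -/
def sigmaSum {ι : Type*} {α : ι → Type*} (G : (i : ι) → SimpleGraph (α i)) :
    SimpleGraph ((i : ι) × α i) where
  Adj x y := ∃ (i : ι) (a b : α i), (G i).Adj a b ∧ x = ⟨i, a⟩ ∧ y = ⟨i, b⟩
  symm := by constructor; rintro x y ⟨i, a, b, h, rfl, rfl⟩; exact ⟨i, b, a, h.symm, rfl, rfl⟩
  loopless := by
    constructor
    rintro x ⟨i, a, b, h, rfl, h2⟩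
    obtain ⟨-, h3⟩ := Sigma.mk.inj_iff.mp h2
    exact (G i).irrefl (by cases h3; exact h)


/-!
Over `𝔽₂`, write `xᵢ, yᵢ` for the indicator vectors of the sides of the bicliques of an odd cover
of `K_n` with `m` bicliques. The odd cover condition says `J - I = Σᵢ (xᵢ yᵢᵀ + yᵢ xᵢᵀ)`, i.e.
`U Wᵀ = I` for the `n × (2m + 1)` matrices `U = [𝟙 | X | Y]` and `W = [𝟙 | Y | X]`. Hence
`n ≤ 2m + 1`, and equality would force `Wᵀ U = I`, whereas the diagonal entry of `Wᵀ U` at the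
column of `x₀` is `|X₀ ∩ Y₀| = 0`. So `n ≤ 2m`, which for `n = 2k + 1` means `m ≥ k + 1`.

Conversely, on the vertices `z, a₁, b₁, …, a_k, b_k` the `k + 1` bicliques `({aⱼ}, {bⱼ})` and
`({z} ∪ {aⱼ : j > i} ∪ {bⱼ : j < i}, {aᵢ, bᵢ})` for `1 ≤ i ≤ k` form an odd cover of `K_{2k+1}`.
-/

theorem Matrix.card_lt_card_of_mul_eq_one {K m n : Type*} [Field K] [Fintype m] [Fintype n]
    [DecidableEq m] [DecidableEq n] {A : Matrix m n K} {B : Matrix n m K} (hAB : A * B = 1)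
    (j : n) (hj : (B * A) j j ≠ 1) : Fintype.card m < Fintype.card n := by
  have hle : Fintype.card m ≤ Fintype.card n :=
    calc Fintype.card m = (A * B).rank := by rw [hAB, Matrix.rank_one]
      _ ≤ A.rank := A.rank_mul_le_left B
      _ ≤ Fintype.card n := A.rank_le_card_width
  refine hle.lt_of_ne fun h => hj ?_
  have hBA : B * A = 1 := (Matrix.mul_eq_one_comm_of_card_eq m n K h).mp hAB
  rw [hBA, Matrix.one_apply_eq]

namespace OddCover

open Matrix

lemma isOddCover_top_preimage {V W : Type*} {m : ℕ} {f : Fin m → Finset W × Finset W}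
    (hf : IsOddCover (⊤ : SimpleGraph W) f) {φ : V → W} (hφ : φ.Injective) :
    IsOddCover (⊤ : SimpleGraph V)
      fun i => ((f i).1.preimage φ hφ.injOn, (f i).2.preimage φ hφ.injOn) := by
  refine ⟨fun i => Finset.disjoint_preimage (hs := hφ.injOn) (ht := hφ.injOn) (hf.1 i),
    fun u v huv => ?_⟩
  simpa [coversCount, huv, hφ.ne huv] using hf.2 (φ u) (φ v) (hφ.ne huv)

variable {V : Type*} [DecidableEq V] {m : ℕ}

def crossing (p : Finset V × Finset V) (u v : V) : ZMod 2 :=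
  (if u ∈ p.1 then 1 else 0) * (if v ∈ p.2 then 1 else 0) +
    (if v ∈ p.1 then 1 else 0) * (if u ∈ p.2 then 1 else 0)

lemma crossing_self {p : Finset V × Finset V} (hp : Disjoint p.1 p.2) (u : V) :
    crossing p u u = 0 := by
  have hu : ¬ (u ∈ p.1 ∧ u ∈ p.2) := fun h => Finset.disjoint_left.mp hp h.1 h.2
  by_cases h : u ∈ p.1 <;> simp_all [crossing]

lemma coversCount_cast {f : Fin m → Finset V × Finset V} (hf : ∀ i, Disjoint (f i).1 (f i).2)
    (u v : V) : (coversCount f u v : ZMod 2) = ∑ i, crossing (f i) u v := by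
  rw [coversCount, Nat.card_eq_fintype_card, Fintype.card_subtype, Finset.natCast_card_filter]
  refine Finset.sum_congr rfl fun i _ => ?_
  have hu : ¬ (u ∈ (f i).1 ∧ u ∈ (f i).2) := fun h => Finset.disjoint_left.mp (hf i) h.1 h.2
  by_cases h1 : u ∈ (f i).1 <;> by_cases h2 : v ∈ (f i).2 <;> by_cases h3 : u ∈ (f i).2 <;>
    by_cases h4 : v ∈ (f i).1 <;> simp_all [crossing]

lemma isOddCover_top_of_sum_crossing {f : Fin m → Finset V × Finset V}
    (hf : ∀ i, Disjoint (f i).1 (f i).2) (h : ∀ u v, u ≠ v → ∑ i, crossing (f i) u v = 1) :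
    IsOddCover (⊤ : SimpleGraph V) f :=
  ⟨hf, fun u v huv => by
    simp [huv, ← ZMod.natCast_eq_one_iff_odd, coversCount_cast hf, h u v huv]⟩

def incidence (f : Fin m → Finset V × Finset V) : Matrix V (Option (Fin m × Bool)) (ZMod 2) :=
  of fun u c => c.elim 1 fun ib => if u ∈ (if ib.2 then (f ib.1).2 else (f ib.1).1) then 1 else 0

lemma incidence_mul_transpose_swap (f : Fin m → Finset V × Finset V) (u v : V) :
    (incidence f * (incidence (Prod.swap ∘ f))ᵀ) u v = 1 + ∑ i, crossing (f i) u v := by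
  simp only [mul_apply, transpose_apply, Fintype.sum_option, Fintype.sum_prod_type,
    Fintype.sum_bool, incidence, of_apply, Option.elim, Function.comp_apply, Prod.fst_swap,
    Prod.snd_swap, crossing, mul_one, if_true, Bool.false_eq_true, if_false]
  congr 1
  exact Finset.sum_congr rfl fun i _ => by ring

lemma incidence_mul_transpose_swap_eq_one {f : Fin m → Finset V × Finset V}
    (hf : IsOddCover (⊤ : SimpleGraph V) f) : incidence f * (incidence (Prod.swap ∘ f))ᵀ = 1 := by
  ext u v
  rw [incidence_mul_transpose_swap, one_apply]
  split_ifs with huv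
  · subst huv
    simp [crossing_self (hf.1 _)]
  · have hodd : Odd (coversCount f u v) := (hf.2 u v huv).mp huv
    rw [← coversCount_cast hf.1, (ZMod.natCast_eq_one_iff_odd).mpr hodd]
    decide

lemma card_le_two_mul [Fintype V] {f : Fin m → Finset V × Finset V}
    (hf : IsOddCover (⊤ : SimpleGraph V) f) (hV : 1 < Fintype.card V) :
    Fintype.card V ≤ 2 * m := by
  obtain ⟨u, v, huv⟩ := Fintype.exists_pair_of_one_lt_card hV
  cases m with
  | zero =>
    have hodd : Odd (coversCount f u v) := (hf.2 u v huv).mp huv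
    simp [coversCount] at hodd
  | succ m =>
    have hdiag : ((incidence (Prod.swap ∘ f))ᵀ * incidence f) (some (0, false)) (some (0, false))
        ≠ 1 := by
      have hzero : ∀ w, (if w ∈ (f 0).2 then 1 else 0) * (if w ∈ (f 0).1 then 1 else 0) =
          (0 : ZMod 2) := fun w => by
        have hw : ¬ (w ∈ (f 0).1 ∧ w ∈ (f 0).2) :=
          fun h => Finset.disjoint_left.mp (hf.1 0) h.1 h.2
        by_cases h : w ∈ (f 0).1 <;> simp_all
      simp [mul_apply, incidence, hzero]
    have := Matrix.card_lt_card_of_mul_eq_one (incidence_mul_transpose_swap_eq_one hf) _ hdiag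
    simp only [Fintype.card_option, Fintype.card_prod, Fintype.card_fin, Fintype.card_bool] at this
    omega

variable {k : ℕ}

/- Vertices: `none` is `z`, `some (j, false)` is `aⱼ`, `some (j, true)` is `bⱼ`.
Bicliques: `none` is `({aⱼ}, {bⱼ})`, `some i` is `({z} ∪ {aⱼ : j > i} ∪ {bⱼ : j < i}, {aᵢ, bᵢ})`. -/
def leftSide : Option (Fin k) → Option (Fin k × Bool) → Bool
  | none, none => false
  | none, some (_, b) => !b
  | some _, none => true
  | some i, some (j, false) => i < j
  | some i, some (j, true) => j < i

def rightSide : Option (Fin k) → Option (Fin k × Bool) → Bool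
  | none, none => false
  | none, some (_, b) => b
  | some _, none => false
  | some i, some (j, _) => j = i

def completeCover (k : ℕ) (c : Option (Fin k)) :
    Finset (Option (Fin k × Bool)) × Finset (Option (Fin k × Bool)) :=
  (univ.filter (leftSide c ·), univ.filter (rightSide c ·))

lemma mem_completeCover_fst {c : Option (Fin k)} {u : Option (Fin k × Bool)} :
    u ∈ (completeCover k c).1 ↔ leftSide c u := by
  simp [completeCover]

lemma mem_completeCover_snd {c : Option (Fin k)} {u : Option (Fin k × Bool)} :
    u ∈ (completeCover k c).2 ↔ rightSide c u := by
  simp [completeCover]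

lemma disjoint_completeCover (c : Option (Fin k)) :
    Disjoint (completeCover k c).1 (completeCover k c).2 := by
  rw [Finset.disjoint_left]
  intro u
  rcases c with _ | i <;> rcases u with _ | ⟨j, _ | _⟩ <;>
    simp [mem_completeCover_fst, mem_completeCover_snd, leftSide, rightSide] <;> omega

lemma sum_crossing_completeCover {u v : Option (Fin k × Bool)} (huv : u ≠ v) :
    ∑ c, crossing (completeCover k c) u v = 1 := by
  rcases u with _ | ⟨j, _ | _⟩ <;> rcases v with _ | ⟨l, _ | _⟩ <;>
    simp [Fintype.sum_option, crossing, mem_completeCover_fst, mem_completeCover_snd, leftSide,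
      rightSide, Finset.sum_add_distrib] at huv ⊢
  all_goals split_ifs <;> first | rfl | omega

lemma isOddCover_top_completeCover (k : ℕ) :
    IsOddCover (⊤ : SimpleGraph (Option (Fin k × Bool))) (completeCover k ∘ finSuccEquiv k) :=
  isOddCover_top_of_sum_crossing (fun _ => disjoint_completeCover _) fun _ _ huv =>
    (Equiv.sum_comp (finSuccEquiv k) _).trans (sum_crossing_completeCover huv)

theorem exists_isOddCover_top (k : ℕ) :
    ∃ f : Fin (k + 1) → Finset (Fin (2 * k + 1)) × Finset (Fin (2 * k + 1)),
      IsOddCover (⊤ : SimpleGraph (Fin (2 * k + 1))) f := by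
  obtain ⟨e⟩ : Nonempty (Fin (2 * k + 1) ≃ Option (Fin k × Bool)) :=
    Fintype.card_eq.mp <| by simp [mul_comm]
  exact ⟨_, isOddCover_top_preimage (isOddCover_top_completeCover k) e.injective⟩

end OddCover

/-- For every positive integer `k`, `b₂(K_{2k+1}) = k + 1`. -/
theorem stmt9 (k : ℕ) (hk : 1 ≤ k) :
    b2 (⊤ : SimpleGraph (Fin (2 * k + 1))) = k + 1 := by
  obtain ⟨f, hf⟩ := OddCover.exists_isOddCover_top k
  refine le_antisymm (Nat.sInf_le ⟨f, hf⟩) (le_csInf ⟨k + 1, f, hf⟩ ?_)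
  rintro m ⟨g, hg⟩
  have := OddCover.card_le_two_mul hg (by rw [Fintype.card_fin]; omega)
  rw [Fintype.card_fin] at this
  omega
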